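/- Let x0 be a Pareto critical point with a strictly positive KKT multiplier, suppose rank(Df(x0)) = k-1, f is three times continuously differentiable, and D_x F-tilde(x0, alpha0) is invertible for the (unique) alpha0 in A(x0). Then the tangent cone Tan(P_int, x0) is contained in pr_x(T_{(x0,alpha0)} M), i.e. every tangent direction to P_int at x0 is the projection of a tangent vector of the extended manifold M. -/

import Mathlib

noncomputable def grad (n : ℕ) (g : (Fin n → ℝ) → ℝ) (x : Fin n → ℝ) : Fin n → ℝ :=
  fun j => fderiv ℝ g x (Pi.single j 1)

noncomputable def Ftilde (n K : ℕ) (f : Fin (K + 1) → (Fin n → ℝ) → ℝ)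
    (p : (Fin n → ℝ) × (Fin K → ℝ)) : Fin n → ℝ :=
  (∑ i : Fin K, p.2 i •
      (grad n (f i.castSucc) p.1 - grad n (f (Fin.last K)) p.1))
    + grad n (f (Fin.last K)) p.1

def openSimplex (K : ℕ) : Set (Fin K → ℝ) := {α | (∀ i, 0 < α i) ∧ ∑ i, α i < 1}

noncomputable def DxFtilde (n K : ℕ) (f : Fin (K + 1) → (Fin n → ℝ) → ℝ)
    (p : (Fin n → ℝ) × (Fin K → ℝ)) : (Fin n → ℝ) →L[ℝ] (Fin n → ℝ) :=
  fderiv ℝ (fun x => Ftilde n K f (x, p.2)) p.1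

def ParetoCriticalInt (n K : ℕ) (f : Fin (K + 1) → (Fin n → ℝ) → ℝ) : Set (Fin n → ℝ) :=
  {x | ∃ α ∈ openSimplex K, Ftilde n K f (x, α) = 0}

noncomputable def Jac (n k : ℕ) (f : Fin k → (Fin n → ℝ) → ℝ) (x : Fin n → ℝ) :
    Matrix (Fin k) (Fin n) ℝ :=
  Matrix.of fun i j => fderiv ℝ (f i) x (Pi.single j 1)

def Tan {E : Type*} [NormedAddCommGroup E] [NormedSpace ℝ E] (Y : Set E) (x : E) :
    Set E :=
  {v | v = 0 ∨ ∃ u : ℕ → E, (∀ i, u i ≠ 0) ∧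
    Filter.Tendsto u Filter.atTop (nhds 0) ∧ (∀ i, x + u i ∈ Y) ∧
    Filter.Tendsto (fun i => ‖u i‖⁻¹ • u i) Filter.atTop (nhds (‖v‖⁻¹ • v))}

/-!
Let `x₀ + uᵢ ∈ P_int` with multipliers `αᵢ` and `uᵢ / ‖uᵢ‖ → v / ‖v‖`. The `αᵢ` lie in a compact
set and every limit point is a multiplier of `x₀`, which the rank condition makes unique, so
`αᵢ → α₀` along a subsequence. The normalised increments `(uᵢ, αᵢ - α₀)` of points of the zero
set of `F̃` accumulate at a unit tangent vector `(a, b)` of that set, which therefore lies in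
`ker DF̃(x₀, α₀)`, and `a` is a nonnegative multiple of `v`. As `F̃` is affine in `α` with a linear
part that the rank condition makes injective, `a ≠ 0`, and rescaling `(a, b)` gives a kernel
vector over `v`.
-/

open Filter Topology Set
open scoped Matrix

theorem LinearMap.ker_eq_span_singleton_of_finrank_range_add_one {𝕜 E M : Type*} [Field 𝕜]
    [AddCommGroup E] [Module 𝕜 E] [FiniteDimensional 𝕜 E] [AddCommGroup M] [Module 𝕜 M]
    (V : E →ₗ[𝕜] M) {β₀ : E} (hβ₀ : β₀ ≠ 0) (hVβ₀ : V β₀ = 0)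
    (hrank : Module.finrank 𝕜 (range V) + 1 = Module.finrank 𝕜 E) :
    ker V = Submodule.span 𝕜 {β₀} := by
  refine (Submodule.eq_of_le_of_finrank_eq ?_ ?_).symm
  · rwa [Submodule.span_singleton_le_iff_mem]
  · have := V.finrank_range_add_finrank_ker
    rw [finrank_span_singleton hβ₀]
    omega

theorem HasFDerivWithinAt.apply_eq_zero_of_mem_tangentConeAt {𝕜 E G : Type*}
    [NontriviallyNormedField 𝕜] [NormedAddCommGroup E] [NormedSpace 𝕜 E]
    [NormedAddCommGroup G] [NormedSpace 𝕜 G] {F : E → G} {L : E →L[𝕜] G} {s : Set E} {x y : E}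
    (hF : HasFDerivWithinAt F L s x) (hs : ∀ z ∈ s, F z = F x)
    (hy : y ∈ tangentConeAt 𝕜 s x) : L y = 0 := by
  obtain ⟨_, l, _, c, d, hd₀, hds, hcd⟩ := exists_fun_of_mem_tangentConeAt hy
  refine tendsto_nhds_unique (hF.lim hd₀ hds hcd) (tendsto_const_nhds.congr' ?_)
  filter_upwards [hds] with i hi
  rw [hs _ hi, sub_self, smul_zero]

theorem eq_norm_smul_of_tendsto {E ι : Type*} [NormedAddCommGroup E] [NormedSpace ℝ E]
    {l : Filter ι} [l.NeBot] {y e : ι → E} {a e₀ : E} (hy : Tendsto y l (𝓝 a))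
    (he : Tendsto e l (𝓝 e₀)) (hye : ∀ i, y i = ‖y i‖ • e i) : a = ‖a‖ • e₀ :=
  tendsto_nhds_unique hy <| (hy.norm.smul he).congr fun i => (hye i).symm

/-- The tangent vector is a limit point of the normalised increments `(uᵢ, βᵢ - a)` on the unit
sphere. -/
theorem exists_ne_zero_mem_tangentConeAt_prod {E A : Type*} [NormedAddCommGroup E]
    [NormedSpace ℝ E] [ProperSpace E] [NormedAddCommGroup A] [NormedSpace ℝ A] [ProperSpace A]
    {S : Set (E × A)} {x e : E} {a : A} {u : ℕ → E} {β : ℕ → A} (hu : ∀ i, u i ≠ 0)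
    (hu₀ : Tendsto u atTop (𝓝 0)) (hβ : Tendsto β atTop (𝓝 a))
    (he : Tendsto (fun i => ‖u i‖⁻¹ • u i) atTop (𝓝 e)) (hS : ∀ i, (x + u i, β i) ∈ S) :
    ∃ w ∈ tangentConeAt ℝ S (x, a), w ≠ 0 ∧ w.1 = ‖w.1‖ • e := by
  set q : ℕ → E × A := fun i => (u i, β i - a)
  have hq : ∀ i, ‖q i‖ ≠ 0 := fun i => norm_ne_zero_iff.mpr fun h => hu i (congrArg Prod.fst h)
  have hq₀ : Tendsto q atTop (𝓝 0) := by
    have := hu₀.prodMk_nhds (hβ.sub_const a)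
    rwa [sub_self, Prod.mk_zero_zero] at this
  have hsphere : ∀ i, ‖q i‖⁻¹ • q i ∈ Metric.sphere (0 : E × A) 1 := fun i => by
    simp [norm_smul, hq i]
  obtain ⟨w, hw, ψ, hψ, hqw⟩ := (isCompact_sphere (0 : E × A) 1).tendsto_subseq hsphere
  refine ⟨w, mem_tangentConeAt_of_seq atTop (fun i => ‖q (ψ i)‖⁻¹) (q ∘ ψ)
    (hq₀.comp hψ.tendsto_atTop) (.of_forall fun i => by simpa [q] using hS (ψ i)) hqw, ?_, ?_⟩
  · rintro rfl
    simp at hw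
  · refine eq_norm_smul_of_tendsto ((continuous_fst.tendsto w).comp hqw)
      (he.comp hψ.tendsto_atTop) fun i => ?_
    have hui : ‖u (ψ i)‖ ≠ 0 := norm_ne_zero_iff.mpr (hu (ψ i))
    have hfst : (‖q (ψ i)‖⁻¹ • q (ψ i)).1 = ‖q (ψ i)‖⁻¹ • u (ψ i) := rfl
    simp only [Function.comp_apply, hfst, norm_smul, norm_inv, norm_norm, smul_smul, mul_assoc,
      mul_inv_cancel₀ hui, mul_one]

section Weights

variable {n K : ℕ} {f : Fin (K + 1) → (Fin n → ℝ) → ℝ}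

theorem Jac_transpose_mulVec (k : ℕ) (g : Fin k → (Fin n → ℝ) → ℝ) (x : Fin n → ℝ)
    (β : Fin k → ℝ) : (Jac n k g x)ᵀ *ᵥ β = ∑ i, β i • grad n (g i) x := by
  funext j
  simp [Matrix.mulVec, dotProduct, Jac, grad, Finset.sum_apply, mul_comm]

theorem sum_snoc_smul_grad (x : Fin n → ℝ) (α : Fin K → ℝ) (c : ℝ) :
    ∑ i, (Fin.snoc α c : Fin (K + 1) → ℝ) i • grad n (f i) x
      = ∑ i : Fin K, α i • (grad n (f i.castSucc) x - grad n (f (Fin.last K)) x)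
        + (c + ∑ i, α i) • grad n (f (Fin.last K)) x := by
  simp only [Fin.sum_univ_castSucc, Fin.snoc_castSucc, Fin.snoc_last, smul_sub, add_smul,
    Finset.sum_sub_distrib, ← Finset.sum_smul]
  abel

theorem Ftilde_eq_sum_snoc_smul_grad (x : Fin n → ℝ) (α : Fin K → ℝ) :
    Ftilde n K f (x, α)
      = ∑ i, (Fin.snoc α (1 - ∑ j, α j) : Fin (K + 1) → ℝ) i • grad n (f i) x := by
  rw [sum_snoc_smul_grad, sub_add_cancel, one_smul, Ftilde]

theorem Ftilde_add_smul_snd (x : Fin n → ℝ) (α b : Fin K → ℝ) (t : ℝ) :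
    Ftilde n K f (x, α + t • b) = Ftilde n K f (x, α)
      + t • ∑ i, (Fin.snoc b (-∑ j, b j) : Fin (K + 1) → ℝ) i • grad n (f i) x := by
  rw [sum_snoc_smul_grad, neg_add_cancel, zero_smul, add_zero]
  simp only [Ftilde, Pi.add_apply, Pi.smul_apply, smul_eq_mul, add_smul, mul_smul,
    Finset.sum_add_distrib, ← Finset.smul_sum]
  abel

end Weights

section Multiplier

variable {n K : ℕ} {f : Fin (K + 1) → (Fin n → ℝ) → ℝ} {x₀ : Fin n → ℝ} {α₀ : Fin K → ℝ}

/-- The rank condition makes the kernel of `Jacᵀ` the line spanned by the KKT weights. -/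
theorem eq_sum_smul_snoc_of_sum_smul_grad_eq_zero (hF : Ftilde n K f (x₀, α₀) = 0)
    (hrank : (Jac n (K + 1) f x₀).rank = K) {β : Fin (K + 1) → ℝ}
    (hβ : ∑ i, β i • grad n (f i) x₀ = 0) :
    β = (∑ i, β i) • (Fin.snoc α₀ (1 - ∑ j, α₀ j) : Fin (K + 1) → ℝ) := by
  set β₀ : Fin (K + 1) → ℝ := Fin.snoc α₀ (1 - ∑ j, α₀ j)
  set V := (Jac n (K + 1) f x₀)ᵀ.mulVecLin
  have hsum : ∑ i, β₀ i = 1 := by simp [β₀]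
  have hβ₀ : β₀ ≠ 0 := fun h => by simp [h] at hsum
  have hker : LinearMap.ker V = Submodule.span ℝ {β₀} := by
    refine V.ker_eq_span_singleton_of_finrank_range_add_one hβ₀ ?_ ?_
    · rw [Matrix.mulVecLin_apply, Jac_transpose_mulVec, ← Ftilde_eq_sum_snoc_smul_grad, hF]
    · rw [← Matrix.rank, Matrix.rank_transpose, hrank, Module.finrank_fin_fun]
  have hβV : β ∈ LinearMap.ker V := by
    rwa [LinearMap.mem_ker, Matrix.mulVecLin_apply, Jac_transpose_mulVec]
  obtain ⟨t, rfl⟩ := Submodule.mem_span_singleton.mp (hker ▸ hβV)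
  simp [← Finset.mul_sum, hsum]

theorem eq_of_Ftilde_eq_zero (hF : Ftilde n K f (x₀, α₀) = 0)
    (hrank : (Jac n (K + 1) f x₀).rank = K) {α : Fin K → ℝ}
    (hα : Ftilde n K f (x₀, α) = 0) : α = α₀ := by
  rw [Ftilde_eq_sum_snoc_smul_grad] at hα
  have h := eq_sum_smul_snoc_of_sum_smul_grad_eq_zero hF hrank hα
  rw [Fin.sum_snoc, add_sub_cancel, one_smul] at h
  funext j
  simpa using congrFun h j.castSucc

theorem eq_zero_of_sum_snoc_smul_grad_eq_zero (hF : Ftilde n K f (x₀, α₀) = 0)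
    (hrank : (Jac n (K + 1) f x₀).rank = K) {b : Fin K → ℝ}
    (hb : ∑ i, (Fin.snoc b (-∑ j, b j) : Fin (K + 1) → ℝ) i • grad n (f i) x₀ = 0) :
    b = 0 := by
  have h := eq_sum_smul_snoc_of_sum_smul_grad_eq_zero hF hrank hb
  rw [Fin.sum_snoc, add_neg_cancel, zero_smul] at h
  funext j
  simpa using congrFun h j.castSucc

theorem openSimplex_subset_closedBall : openSimplex K ⊆ Metric.closedBall 0 1 := by
  intro α ⟨hpos, hsum⟩
  rw [mem_closedBall_zero_iff, pi_norm_le_iff_of_nonneg zero_le_one]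
  intro j
  have hle : α j ≤ ∑ i, α i := Finset.single_le_sum (fun i _ => (hpos i).le) (Finset.mem_univ j)
  rw [Real.norm_eq_abs, abs_le]
  constructor <;> linarith [hpos j]

theorem exists_subseq_tendsto_of_Ftilde_eq_zero (hc : Continuous (Ftilde n K f))
    (hF : Ftilde n K f (x₀, α₀) = 0) (hrank : (Jac n (K + 1) f x₀).rank = K)
    {u : ℕ → Fin n → ℝ} {α : ℕ → Fin K → ℝ} (hu₀ : Tendsto u atTop (𝓝 0))
    (hα : ∀ i, α i ∈ openSimplex K) (hαF : ∀ i, Ftilde n K f (x₀ + u i, α i) = 0) :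
    ∃ φ : ℕ → ℕ, StrictMono φ ∧ Tendsto (α ∘ φ) atTop (𝓝 α₀) := by
  obtain ⟨ᾱ, -, φ, hφ, hαφ⟩ :=
    (isCompact_closedBall (0 : Fin K → ℝ) 1).tendsto_subseq fun i =>
      openSimplex_subset_closedBall (hα i)
  refine ⟨φ, hφ, eq_of_Ftilde_eq_zero hF hrank (α := ᾱ) ?_ ▸ hαφ⟩
  have hlim : Tendsto (fun i => (x₀ + u (φ i), α (φ i))) atTop (𝓝 (x₀, ᾱ)) := by
    simpa using ((hu₀.comp hφ.tendsto_atTop).const_add x₀).prodMk_nhds hαφ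
  exact tendsto_nhds_unique ((hc.tendsto _).comp hlim) (by simp [Function.comp_def, hαF])

end Multiplier

section Smoothness

variable {n K : ℕ} {f : Fin (K + 1) → (Fin n → ℝ) → ℝ}

theorem contDiff_grad {m : WithTop ℕ∞} {g : (Fin n → ℝ) → ℝ} (hg : ContDiff ℝ (m + 1) g) :
    ContDiff ℝ m (grad n g) :=
  contDiff_pi.mpr fun _ => (hg.fderiv_right le_rfl).clm_apply contDiff_const

theorem contDiff_Ftilde {m : WithTop ℕ∞} (hf : ∀ i, ContDiff ℝ (m + 1) (f i)) :
    ContDiff ℝ m (Ftilde n K f) := by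
  have hgrad : ∀ i, ContDiff ℝ m fun p : (Fin n → ℝ) × (Fin K → ℝ) => grad n (f i) p.1 :=
    fun i => (contDiff_grad (hf i)).comp contDiff_fst
  exact (ContDiff.sum fun i _ => ((contDiff_apply ℝ ℝ i).comp contDiff_snd).smul
    ((hgrad _).sub (hgrad _))).add (hgrad _)

theorem fderiv_Ftilde_apply_inr {p : (Fin n → ℝ) × (Fin K → ℝ)}
    (hp : DifferentiableAt ℝ (Ftilde n K f) p) (b : Fin K → ℝ) :
    fderiv ℝ (Ftilde n K f) p (0, b)
      = ∑ i, (Fin.snoc b (-∑ j, b j) : Fin (K + 1) → ℝ) i • grad n (f i) p.1 := by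
  refine hp.hasFDerivAt.hasLineDerivAt (0, b) |>.unique ?_
  have hline : ∀ t : ℝ, p + t • ((0, b) : (Fin n → ℝ) × (Fin K → ℝ)) = (p.1, p.2 + t • b) :=
    fun t => by ext <;> simp
  simp only [HasLineDerivAt, hline, Ftilde_add_smul_snd]
  simpa using ((hasDerivAt_id (0 : ℝ)).smul_const _).const_add (Ftilde n K f (p.1, p.2))

end Smoothness

theorem tangent_cone_subset_proj_tangent_space_general (n K : ℕ)
    (f : Fin (K + 1) → (Fin n → ℝ) → ℝ) (hf : ∀ i, ContDiff ℝ 3 (f i))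
    (x₀ : Fin n → ℝ) (α₀ : Fin K → ℝ)
    (hF : Ftilde n K f (x₀, α₀) = 0)
    (hrank : (Jac n (K + 1) f x₀).rank = K) :
    Tan (ParetoCriticalInt n K f) x₀ ⊆
      (fun q : (Fin n → ℝ) × (Fin K → ℝ) => q.1) ''
        (LinearMap.ker (fderiv ℝ (Ftilde n K f) (x₀, α₀) :
          ((Fin n → ℝ) × (Fin K → ℝ)) →ₗ[ℝ] (Fin n → ℝ)) :
            Set ((Fin n → ℝ) × (Fin K → ℝ))) := by
  have hC1 : ContDiff ℝ 1 (Ftilde n K f) := contDiff_Ftilde fun i => (hf i).of_le (by norm_num)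
  have hdiff := hC1.differentiable one_ne_zero (x₀, α₀)
  rintro v (rfl | ⟨u, hu, hu₀, hu_mem, hv⟩)
  · exact ⟨0, zero_mem _, rfl⟩
  choose α hα hαF using hu_mem
  obtain ⟨φ, hφ, hαφ⟩ :=
    exists_subseq_tendsto_of_Ftilde_eq_zero hC1.continuous hF hrank hu₀ hα hαF
  obtain ⟨⟨a, b⟩, hw, hw₀, ha⟩ :=
    exists_ne_zero_mem_tangentConeAt_prod (S := {p | Ftilde n K f p = 0}) (fun i => hu (φ i))
      (hu₀.comp hφ.tendsto_atTop) hαφ (hv.comp hφ.tendsto_atTop) fun i => hαF (φ i)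
  have hLw : fderiv ℝ (Ftilde n K f) (x₀, α₀) (a, b) = 0 :=
    hdiff.hasFDerivAt.hasFDerivWithinAt.apply_eq_zero_of_mem_tangentConeAt
      (fun p hp => hp.trans hF.symm) hw
  have ha₀ : a ≠ 0 := by
    rintro rfl
    refine hw₀ (Prod.ext rfl (eq_zero_of_sum_snoc_smul_grad_eq_zero hF hrank ?_))
    rwa [← fderiv_Ftilde_apply_inr hdiff]
  dsimp only at ha
  have hv₀ : ‖v‖ ≠ 0 := fun h => ha₀ (by simpa [h] using ha)
  refine ⟨(‖v‖ / ‖a‖) • (a, b), ?_, ?_⟩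
  · rw [SetLike.mem_coe, LinearMap.mem_ker, ContinuousLinearMap.coe_coe, map_smul, hLw, smul_zero]
  · calc (‖v‖ / ‖a‖) • a = (‖v‖ / ‖a‖ * (‖a‖ * ‖v‖⁻¹)) • v := by rw [← smul_smul, ← smul_smul, ← ha]
      _ = v := by rw [← mul_assoc, div_mul_cancel₀ _ (norm_ne_zero_iff.mpr ha₀),
          mul_inv_cancel₀ hv₀, one_smul]

/-- at a point `x₀ ∈ P_int` with full-rank Jacobian and invertible
`D_x F̃(x₀,α₀)`, the tangent cone of `P_int` is contained in the projection of the
tangent space `ker D F̃(x₀,α₀)` of `M`. -/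
theorem tangent_cone_subset_proj_tangent_space (n K : ℕ) (hK : 0 < K)
    (f : Fin (K + 1) → (Fin n → ℝ) → ℝ) (hf : ∀ i, ContDiff ℝ 3 (f i))
    (hreg : ∀ p : (Fin n → ℝ) × (Fin K → ℝ),
      p.2 ∈ openSimplex K → Ftilde n K f p = 0 → IsUnit (DxFtilde n K f p))
    (x₀ : Fin n → ℝ) (α₀ : Fin K → ℝ) (hα₀ : α₀ ∈ openSimplex K)
    (hF : Ftilde n K f (x₀, α₀) = 0)
    (hrank : (Jac n (K + 1) f x₀).rank = K) :
    Tan (ParetoCriticalInt n K f) x₀ ⊆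
      (fun q : (Fin n → ℝ) × (Fin K → ℝ) => q.1) ''
        (LinearMap.ker (fderiv ℝ (Ftilde n K f) (x₀, α₀) :
          ((Fin n → ℝ) × (Fin K → ℝ)) →ₗ[ℝ] (Fin n → ℝ)) :
            Set ((Fin n → ℝ) × (Fin K → ℝ))) :=
  tangent_cone_subset_proj_tangent_space_general n K f hf x₀ α₀ hF hrank
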